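/- arXiv:2409.04400 — 2 statements merged into one kernel-verified Lean document; each statement's English description precedes it below -/
import Mathlib

section
/- Let (A, I) be a transversal prism (A a δ-ring with Frobenius lift φ, I an invertible ideal with (A,I) a prism, and A/I p-torsion-free), and r ≥ 1. Set J_r = I·(I·φ(I)···φ^{r-1}(I))^{p-1}. Then the image of the ideal (φ^r)(I) in the quotient ring A/J_r equals the principal ideal (p) ⊆ A/J_r. -/
/-- The `n`-fold composite of a ring endomorphism. -/
def iterHom {A : Type*} [CommRing A] (φ : A →+* A) : ℕ → (A →+* A)
  | 0 => RingHom.id A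
  | n + 1 => φ.comp (iterHom φ n)

/-- `prIdeal φ I r = I · φ(I) ⋯ φ^(r-1)(I)` (the ideal `I_r`), with `prIdeal φ I 0 = (1)`. -/
def prIdeal {A : Type*} [CommRing A] (φ : A →+* A) (I : Ideal A) : ℕ → Ideal A
  | 0 => ⊤
  | n + 1 => prIdeal φ I n * I.map (iterHom φ n)

/-!
Write `I = (d)`. Since `p ∈ (d, φ(d))` and `φ(d) = d^p + p δ(d)`, we get
`p (1 - b δ(d)) ∈ (d)` for some `b`; transversality gives `1 - b δ(d) ∈ (d)`, and as `d` lies in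
the Jacobson radical of the `(p, I)`-complete ring `A`, `δ(d)` is a unit. Thus `φ(d) ≡ p·unit`
modulo `I^p = J_1`. Applying `φ` and using `φ(I) ⊆ (p) + I^p` together with
`I^p · φ(I_s)^(p-1) = I · I_(s+1)^(p-1)` propagates this to `φ^s(d) ≡ p·unit` modulo `J_s`;
the error term of the form `p·w` with `w ∈ φ(I)` is absorbed into the unit.
-/

section

variable {A : Type*} [CommRing A]

theorem IsUnit.add_of_mem_jacobson_bot {u j : A} (hu : IsUnit u)
    (hj : j ∈ Ideal.jacobson (⊥ : Ideal A)) : IsUnit (u + j) := by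
  obtain ⟨v, rfl⟩ := hu
  have hunit : IsUnit (j * ↑v⁻¹ + 1) := Ideal.mem_jacobson_bot.mp hj _
  have hfactor : (v : A) * (j * ↑v⁻¹ + 1) = v + j := by
    linear_combination j * v.mul_inv
  exact hfactor ▸ v.isUnit.mul hunit

theorem Ideal.map_mk_span_singleton_eq_of_eq_mul_add {J : Ideal A} {x a u e : A}
    (hu : IsUnit u) (he : e ∈ J) (hx : x = a * u + e) :
    (Ideal.span {x}).map (Ideal.Quotient.mk J) = Ideal.span {Ideal.Quotient.mk J a} := by
  rw [Ideal.map_span, Set.image_singleton, hx, map_add, map_mul,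
    Ideal.Quotient.eq_zero_iff_mem.mpr he, add_zero]
  exact Ideal.span_singleton_mul_right_unit (hu.map _) _

namespace prIdeal

variable (φ : A →+* A) (I : Ideal A)

theorem one : prIdeal φ I 1 = I := by
  change ⊤ * I.map (RingHom.id A) = I
  rw [Ideal.map_id, Ideal.top_mul]

theorem succ (r : ℕ) : prIdeal φ I (r + 1) = I * (prIdeal φ I r).map φ := by
  induction r with
  | zero => rw [one, prIdeal, Ideal.map_top, Ideal.mul_top]
  | succ n ih =>
    conv_lhs =>
      change prIdeal φ I (n + 1) * I.map (φ.comp (iterHom φ n))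
      rw [ih, ← Ideal.map_map, mul_assoc, ← Ideal.map_mul]
    rfl

theorem le_self {r : ℕ} (hr : 1 ≤ r) : prIdeal φ I r ≤ I := by
  induction r, hr using Nat.le_induction with
  | base => rw [one]
  | succ n _ ih => exact Ideal.mul_le_left.trans ih

end prIdeal

section FrobeniusLift

variable {p : ℕ} (φ : A →+* A) {I : Ideal A}

theorem Ideal.map_le_span_natCast_sup_pow (δ : A → A)
    (hφ : ∀ x : A, φ x = x ^ p + (p : A) * δ x) :
    I.map φ ≤ Ideal.span {(p : A)} ⊔ I ^ p := by
  refine Ideal.map_le_iff_le_comap.mpr fun x hx => ?_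
  rw [Ideal.mem_comap, hφ x]
  exact add_mem (Ideal.mem_sup_right (Ideal.pow_mem_pow hx p))
    (Ideal.mem_sup_left (Ideal.mul_mem_right _ _ (Ideal.mem_span_singleton_self _)))

theorem isUnit_of_natCast_mem_span_sup_map {d v : A} (hφd : φ d = d ^ p + (p : A) * v)
    (hp : 0 < p) (hdist : (p : A) ∈ Ideal.span {d} ⊔ (Ideal.span {d}).map φ)
    (htrans : ∀ x : A ⧸ Ideal.span {d}, (p : A ⧸ Ideal.span {d}) * x = 0 → x = 0)
    (hd : d ∈ Ideal.jacobson (⊥ : Ideal A)) : IsUnit v := by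
  rw [Ideal.map_span, Set.image_singleton, ← Ideal.span_insert, Ideal.mem_span_pair] at hdist
  obtain ⟨a, b, hab⟩ := hdist
  have hpd : (p : A) * (1 - b * v) = (a + b * d ^ (p - 1)) * d := by
    have hdp : d ^ p = d ^ (p - 1) * d := by rw [← pow_succ, Nat.sub_add_cancel hp]
    linear_combination -hab + b * hφd + b * hdp
  have hmem : 1 - b * v ∈ Ideal.span {d} := by
    rw [← Ideal.Quotient.eq_zero_iff_mem]
    refine htrans _ ?_
    rw [← map_natCast (Ideal.Quotient.mk _), ← map_mul, hpd, Ideal.Quotient.eq_zero_iff_mem]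
    exact Ideal.mul_mem_left _ _ (Ideal.mem_span_singleton_self d)
  have hjac : Ideal.span {d} ≤ Ideal.jacobson (⊥ : Ideal A) :=
    Ideal.span_le.mpr (Set.singleton_subset_iff.mpr hd)
  have hbv : IsUnit (b * v) := by
    simpa using isUnit_one.add_of_mem_jacobson_bot (neg_mem (hjac hmem))
  exact isUnit_of_mul_isUnit_right hbv

theorem Ideal.map_mul_prIdeal_pow_le (hp : 1 < p) (hI : I.map φ ≤ Ideal.span {(p : A)} ⊔ I ^ p)
    {n : ℕ} (hn : 1 ≤ n) :
    (I * prIdeal φ I n ^ (p - 1)).map φ ≤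
      Ideal.span {(p : A)} * I.map φ ⊔ I * prIdeal φ I (n + 1) ^ (p - 1) := by
  have hpow : (prIdeal φ I n).map φ ^ (p - 1) ≤ I.map φ :=
    (Ideal.pow_le_self (by omega)).trans (Ideal.map_mono (prIdeal.le_self φ I hn))
  have hIp : I * prIdeal φ I (n + 1) ^ (p - 1) = I ^ p * (prIdeal φ I n).map φ ^ (p - 1) := by
    rw [prIdeal.succ, mul_pow, ← mul_assoc, ← pow_succ', Nat.sub_add_cancel hp.le]
  rw [Ideal.map_mul, Ideal.map_pow, hIp]
  calc I.map φ * (prIdeal φ I n).map φ ^ (p - 1)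
      ≤ (Ideal.span {(p : A)} ⊔ I ^ p) * (prIdeal φ I n).map φ ^ (p - 1) := Ideal.mul_mono_left hI
    _ = Ideal.span {(p : A)} * (prIdeal φ I n).map φ ^ (p - 1) ⊔
          I ^ p * (prIdeal φ I n).map φ ^ (p - 1) := Ideal.sup_mul _ _ _
    _ ≤ _ := sup_le_sup_right (Ideal.mul_mono_right hpow) _

theorem exists_iterHom_apply_eq_natCast_mul_add (hp : 1 < p)
    (hI : I.map φ ≤ Ideal.span {(p : A)} ⊔ I ^ p) (hIjac : I.map φ ≤ Ideal.jacobson ⊥)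
    {d u : A} (hd : d ∈ I) (hu : IsUnit u) (hφd : φ d = d ^ p + (p : A) * u)
    {s : ℕ} (hs : 1 ≤ s) :
    ∃ v e, IsUnit v ∧ e ∈ I * prIdeal φ I s ^ (p - 1) ∧ iterHom φ s d = (p : A) * v + e := by
  induction s, hs using Nat.le_induction with
  | base =>
    refine ⟨u, d ^ p, hu, ?_, by rw [add_comm]; exact hφd⟩
    rw [prIdeal.one, ← pow_succ', Nat.sub_add_cancel hp.le]
    exact Ideal.pow_mem_pow hd p
  | succ n hn ih =>
    obtain ⟨v, e, hv, he, heq⟩ := ih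
    obtain ⟨z, hz, y, hy, hzy⟩ :=
      Submodule.mem_sup.mp (Ideal.map_mul_prIdeal_pow_le φ hp hI hn (Ideal.mem_map_of_mem φ he))
    obtain ⟨w, hw, rfl⟩ := Ideal.mem_span_singleton_mul.mp hz
    refine ⟨φ v + w, y, (hv.map φ).add_of_mem_jacobson_bot (hIjac hw), hy, ?_⟩
    change φ (iterHom φ n d) = _
    rw [heq, map_add, map_mul, map_natCast, ← hzy]
    ring

end FrobeniusLift

end

theorem statement1_general
    (p : ℕ) (hp : p.Prime) {A : Type*} [CommRing A]
    (δ : A → A) (φ : A →+* A) (I : Ideal A) (d : A)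
    (hdgen : I = Ideal.span {d})
    (hφ : ∀ x : A, φ x = x ^ p + (p : A) * δ x)
    (hcomplete : IsAdicComplete (Ideal.span {(p : A)} ⊔ I) A)
    (hdist : (p : A) ∈ I ⊔ I.map φ)
    (htrans : ∀ x : A ⧸ I, (p : A ⧸ I) * x = 0 → x = 0)
    (r : ℕ) (hr : 1 ≤ r) :
    (I.map (iterHom φ r)).map
        (Ideal.Quotient.mk (I * (prIdeal φ I r) ^ (p - 1))) =
      Ideal.span {(p : A ⧸ (I * (prIdeal φ I r) ^ (p - 1)))} := by
  subst hdgen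
  have hjac : Ideal.span {(p : A)} ⊔ Ideal.span {d} ≤ Ideal.jacobson ⊥ :=
    IsAdicComplete.le_jacobson_bot _
  have hI := Ideal.map_le_span_natCast_sup_pow φ δ hφ (I := Ideal.span {d})
  have hIjac : (Ideal.span {d}).map φ ≤ Ideal.jacobson ⊥ :=
    hI.trans ((sup_le_sup_left (Ideal.pow_le_self hp.ne_zero) _).trans hjac)
  have hu : IsUnit (δ d) := isUnit_of_natCast_mem_span_sup_map φ (hφ d) hp.pos hdist htrans
    (hjac (Ideal.mem_sup_right (Ideal.mem_span_singleton_self d)))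
  obtain ⟨v, e, hv, he, heq⟩ := exists_iterHom_apply_eq_natCast_mul_add φ hp.one_lt hI hIjac
    (Ideal.mem_span_singleton_self d) hu (hφ d) hr
  rw [Ideal.map_span, Set.image_singleton,
    Ideal.map_mk_span_singleton_eq_of_eq_mul_add hv he heq, map_natCast]

/-- Lemma 2.1: for a transversal prism `(A, I)` and `r ≥ 1`, the image of the ideal
`(φ^r)(I)` in `A / J_r` (with `J_r = I·I_r^(p-1)`) equals the principal ideal `(p)`. -/
theorem statement1
    (p : ℕ) (hp : p.Prime) {A : Type*} [CommRing A]
    (δ : A → A) (φ : A →+* A) (I : Ideal A) (d : A)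
    (hdgen : I = Ideal.span {d}) (hdnz : d ∈ nonZeroDivisors A)
    (hφ : ∀ x : A, φ x = x ^ p + (p : A) * δ x)
    (hδ1 : δ 1 = 0)
    (hδadd : ∀ x y : A, δ (x + y) =
      δ x + δ y - ∑ i ∈ Finset.Ioo 0 p, ((p.choose i / p : ℕ) : A) * x ^ i * y ^ (p - i))
    (hδmul : ∀ x y : A, δ (x * y) =
      x ^ p * δ y + y ^ p * δ x + (p : A) * δ x * δ y)
    (hcomplete : IsAdicComplete (Ideal.span {(p : A)} ⊔ I) A)
    (hdist : (p : A) ∈ I ⊔ I.map φ)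
    (htrans : ∀ x : A ⧸ I, (p : A ⧸ I) * x = 0 → x = 0)
    (r : ℕ) (hr : 1 ≤ r) :
    (I.map (iterHom φ r)).map
        (Ideal.Quotient.mk (I * (prIdeal φ I r) ^ (p - 1))) =
      Ideal.span {(p : A ⧸ (I * (prIdeal φ I r) ^ (p - 1)))} :=
  statement1_general p hp δ φ I d hdgen hφ hcomplete hdist htrans r hr
end

section
/- Let (A, I) be a transversal prism and r ≥ 1. Then the quotient ring A/J_r is p-torsion-free, where J_r = I·(I·φ(I)···φ^{r-1}(I))^{p-1}. -/
section RegularPair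

variable {A : Type*} [CommRing A]

def IsRegularPair (e p : A) : Prop :=
  e ∈ nonZeroDivisors A ∧ ∀ x, e ∣ p * x → e ∣ x

theorem forall_mk_mul_eq_zero_iff_forall_dvd (e a : A) :
    (∀ x : A ⧸ Ideal.span {e}, Ideal.Quotient.mk _ a * x = 0 → x = 0) ↔
      ∀ x, e ∣ a * x → e ∣ x := by
  simp only [Ideal.Quotient.mk_surjective.forall, ← map_mul, Ideal.Quotient.eq_zero_iff_mem,
    Ideal.mem_span_singleton]

namespace IsRegularPair

variable {e f p : A}

theorem one (p : A) : IsRegularPair 1 p :=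
  ⟨one_mem _, fun x _ => one_dvd x⟩

theorem mul (he : IsRegularPair e p) (hf : IsRegularPair f p) : IsRegularPair (e * f) p := by
  refine ⟨mul_mem he.1 hf.1, fun x ⟨y, hy⟩ => ?_⟩
  obtain ⟨z, rfl⟩ := he.2 x ⟨f * y, by rw [hy, mul_assoc]⟩
  have hpz : f ∣ p * z :=
    ⟨y, (mul_cancel_left_mem_nonZeroDivisors he.1).mp (by linear_combination hy)⟩
  exact mul_dvd_mul_left e (hf.2 z hpz)

theorem pow (he : IsRegularPair e p) (n : ℕ) : IsRegularPair (e ^ n) p := by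
  induction n with
  | zero => simpa using one p
  | succ n ih => simpa [pow_succ] using ih.mul he

theorem prod {ι : Type*} (s : Finset ι) {g : ι → A} (hg : ∀ i ∈ s, IsRegularPair (g i) p) :
    IsRegularPair (∏ i ∈ s, g i) p :=
  Finset.prod_induction g (IsRegularPair · p) (fun _ _ => mul) (one p) hg

end IsRegularPair

end RegularPair

section AdicSeparation

variable {A : Type*} [CommRing A] {M : Ideal A} [IsHausdorff M A]

theorem IsHausdorff.eq_zero_of_forall_pow_dvd {f y : A} (hf : f ∈ M) (h : ∀ n, f ^ n ∣ y) :
    y = 0 := by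
  refine IsHausdorff.haus ‹_› y fun n => ?_
  obtain ⟨z, rfl⟩ := h n
  simpa [SModEq.zero] using Ideal.mul_mem_right z _ (Ideal.pow_mem_pow hf n)

theorem mem_nonZeroDivisors_of_forall_mul_eq_zero {f g : A} (hf : f ∈ M)
    (hg : ∀ y, g * y = 0 → ∃ z, y = f * z ∧ g * z = 0) : g ∈ nonZeroDivisors A := by
  have hdvd : ∀ n y, g * y = 0 → f ^ n ∣ y := by
    intro n
    induction n with
    | zero => simp
    | succ n ih =>
      intro y hy
      obtain ⟨z, rfl, hz⟩ := hg y hy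
      simpa [pow_succ'] using mul_dvd_mul_left f (ih z hz)
  rw [mem_nonZeroDivisors_iff_right]
  intro y hy
  exact IsHausdorff.eq_zero_of_forall_pow_dvd hf fun n => hdvd n y (by rw [mul_comm, hy])

theorem IsRegularPair.mem_nonZeroDivisors_right {d p : A} (hd : IsRegularPair d p)
    (hdM : d ∈ M) : p ∈ nonZeroDivisors A := by
  refine mem_nonZeroDivisors_of_forall_mul_eq_zero hdM fun y hy => ?_
  obtain ⟨z, rfl⟩ := hd.2 y (by rw [hy]; exact dvd_zero d)
  refine ⟨z, rfl, (mul_cancel_left_mem_nonZeroDivisors hd.1).mp ?_⟩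
  rw [mul_left_comm, hy, mul_zero]

theorem IsRegularPair.add_mul_unit {f p u : A} (hf : IsRegularPair f p) (hfM : f ∈ M)
    (hp : p ∈ nonZeroDivisors A) (hu : IsUnit u) : IsRegularPair (f + p * u) p := by
  constructor
  · refine mem_nonZeroDivisors_of_forall_mul_eq_zero hfM fun y hy => ?_
    have hfy : f ∣ p * (u * y) := ⟨-y, by linear_combination hy⟩
    obtain ⟨z, rfl⟩ := hu.dvd_mul_left.mp (hf.2 _ hfy)
    refine ⟨z, rfl, (mul_cancel_left_mem_nonZeroDivisors hf.1).mp ?_⟩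
    linear_combination hy
  · rintro x ⟨y, hy⟩
    obtain ⟨z, hz⟩ := hf.2 (x - u * y) ⟨y, by linear_combination hy⟩
    have hyz : y = p * z :=
      (mul_cancel_left_mem_nonZeroDivisors hf.1).mp (by linear_combination -hy + p * hz)
    exact ⟨z, (mul_cancel_left_mem_nonZeroDivisors hp).mp
      (by linear_combination hy + (f + p * u) * hyz)⟩

end AdicSeparation

theorem isUnit_of_mem_span_sup_span {A : Type*} [CommRing A] {d p a c : A}
    (hd : ∀ x, d ∣ p * x → d ∣ x) (hdJ : d ∈ (⊥ : Ideal A).jacobson)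
    (h : p ∈ Ideal.span {d} ⊔ Ideal.span {d * a + p * c}) : IsUnit c := by
  obtain ⟨s, t', ht', hst⟩ := Ideal.mem_span_singleton_sup.mp h
  obtain ⟨t, rfl⟩ := Ideal.mem_span_singleton'.mp ht'
  obtain ⟨w, hw⟩ := hd (1 - t * c) ⟨s + t * a, by linear_combination -hst⟩
  have htc : t * c = d * -w + 1 := by linear_combination -hw
  exact isUnit_of_mul_isUnit_right (htc ▸ Ideal.mem_jacobson_bot.mp hdJ (-w))

theorem iterHom_succ_apply' {A : Type*} [CommRing A] (φ : A →+* A) (n : ℕ) (x : A) :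
    iterHom φ (n + 1) x = iterHom φ n (φ x) := by
  induction n with
  | zero => rfl
  | succ n ih => exact congrArg φ ih

theorem prIdeal_span_singleton {A : Type*} [CommRing A] (φ : A →+* A) (d : A) (n : ℕ) :
    prIdeal φ (Ideal.span {d}) n = Ideal.span {∏ k ∈ Finset.range n, iterHom φ k d} := by
  induction n with
  | zero => simp [prIdeal]
  | succ n ih =>
    rw [prIdeal, ih, Ideal.map_span, Set.image_singleton,
      Ideal.span_singleton_mul_span_singleton, Finset.prod_range_succ]

theorem isRegularPair_iterHom {A : Type*} [CommRing A] {M : Ideal A} [IsHausdorff M A]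
    {p : ℕ} (hp : p ≠ 0) {φ : A →+* A} {δ : A → A} (hφ : ∀ x, φ x = x ^ p + p * δ x)
    {d : A} (hd : IsRegularPair d p) (hdM : d ∈ M) (hpM : (p : A) ∈ M) (hδ : IsUnit (δ d))
    (k : ℕ) : IsRegularPair (iterHom φ k d) p ∧ iterHom φ k d ∈ M := by
  induction k with
  | zero => exact ⟨hd, hdM⟩
  | succ k ih =>
    have hsucc : iterHom φ (k + 1) d = iterHom φ k d ^ p + p * iterHom φ k (δ d) := by
      rw [iterHom_succ_apply', hφ, map_add, map_mul, map_pow, map_natCast]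
    have hpowM : iterHom φ k d ^ p ∈ M := Ideal.pow_mem_of_mem M ih.2 p (Nat.pos_of_ne_zero hp)
    rw [hsucc]
    exact ⟨(ih.1.pow p).add_mul_unit hpowM (hd.mem_nonZeroDivisors_right hdM) (hδ.map _),
      add_mem hpowM (M.mul_mem_right _ hpM)⟩

theorem statement2_general
    (p : ℕ) (hp : p.Prime) {A : Type*} [CommRing A]
    (δ : A → A) (φ : A →+* A) (I : Ideal A) (d : A)
    (hdgen : I = Ideal.span {d}) (hdnz : d ∈ nonZeroDivisors A)
    (hφ : ∀ x : A, φ x = x ^ p + (p : A) * δ x)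
    (hcomplete : IsAdicComplete (Ideal.span {(p : A)} ⊔ I) A)
    (hdist : (p : A) ∈ I ⊔ I.map φ)
    (htrans : ∀ x : A ⧸ I, (p : A ⧸ I) * x = 0 → x = 0)
    (r : ℕ) :
    ∀ x : A ⧸ (I * (prIdeal φ I r) ^ (p - 1)),
      (p : A ⧸ (I * (prIdeal φ I r) ^ (p - 1))) * x = 0 → x = 0 := by
  subst hdgen
  have hdM : d ∈ Ideal.span {(p : A)} ⊔ Ideal.span {d} :=
    Ideal.mem_sup_right (Ideal.mem_span_singleton_self d)
  have hpM : (p : A) ∈ Ideal.span {(p : A)} ⊔ Ideal.span {d} :=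
    Ideal.mem_sup_left (Ideal.mem_span_singleton_self _)
  have hd : IsRegularPair d p :=
    ⟨hdnz, (forall_mk_mul_eq_zero_iff_forall_dvd d p).mp (by simpa using htrans)⟩
  have hφd : φ d = d * d ^ (p - 1) + p * δ d := by
    rw [hφ, ← pow_succ', Nat.sub_add_cancel hp.one_le]
  rw [Ideal.map_span, Set.image_singleton, hφd] at hdist
  have hδ : IsUnit (δ d) :=
    isUnit_of_mem_span_sup_span hd.2 (IsAdicComplete.le_jacobson_bot _ hdM) hdist
  have hiter := isRegularPair_iterHom hp.ne_zero hφ hd hdM hpM hδ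
  have hJ := hd.mul ((IsRegularPair.prod (Finset.range r) fun k _ => (hiter k).1).pow (p - 1))
  rw [prIdeal_span_singleton, Ideal.span_singleton_pow, Ideal.span_singleton_mul_span_singleton]
  simpa using (forall_mk_mul_eq_zero_iff_forall_dvd _ _).mpr hJ.2

/-- For a transversal prism `(A, I)` and `r ≥ 1`, the quotient ring `A / J_r` is
`p`-torsion-free, where `J_r = I·(I·φ(I)⋯φ^(r-1)(I))^(p-1)`. -/
theorem statement2
    (p : ℕ) (hp : p.Prime) {A : Type*} [CommRing A]
    (δ : A → A) (φ : A →+* A) (I : Ideal A) (d : A)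
    (hdgen : I = Ideal.span {d}) (hdnz : d ∈ nonZeroDivisors A)
    (hφ : ∀ x : A, φ x = x ^ p + (p : A) * δ x)
    (hδ1 : δ 1 = 0)
    (hδadd : ∀ x y : A, δ (x + y) =
      δ x + δ y - ∑ i ∈ Finset.Ioo 0 p, ((p.choose i / p : ℕ) : A) * x ^ i * y ^ (p - i))
    (hδmul : ∀ x y : A, δ (x * y) =
      x ^ p * δ y + y ^ p * δ x + (p : A) * δ x * δ y)
    (hcomplete : IsAdicComplete (Ideal.span {(p : A)} ⊔ I) A)
    (hdist : (p : A) ∈ I ⊔ I.map φ)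
    (htrans : ∀ x : A ⧸ I, (p : A ⧸ I) * x = 0 → x = 0)
    (r : ℕ) (hr : 1 ≤ r) :
    ∀ x : A ⧸ (I * (prIdeal φ I r) ^ (p - 1)),
      (p : A ⧸ (I * (prIdeal φ I r) ^ (p - 1))) * x = 0 → x = 0 :=
  statement2_general p hp δ φ I d hdgen hdnz hφ hcomplete hdist htrans r
end
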